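/- arXiv:1501.05830 — 11 statements merged into one kernel-verified Lean document; each statement's English description precedes it below -/
import Mathlib

section
/- For all integers n ≥ 0, F_n(q) = a^{ξ(n-1)} · Σ_{l=0}^{⌊(n-1)/2⌋} qbinom(n-l-1, l) · (ab)^{⌊(n-1)/2⌋ - l} · q^{l²}, where qbinom denotes the Gaussian binomial coefficient and ξ(m) = m mod 2. -/
open Finset PowerSeries

variable {R : Type*} [CommRing R]

/-- The Gaussian (q-)binomial coefficient, via the Pascal-type recurrence
`[n+1, k+1] = q^(n-k) [n, k] + [n, k+1]`. -/
def qbinom (q : R) : ℕ → ℕ → R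
  | _, 0 => 1
  | 0, _ + 1 => 0
  | n + 1, k + 1 => qbinom q n k * q ^ (n - k) + qbinom q n (k + 1)

/-- The q-biperiodic Fibonacci sequence. -/
def biF (a b q : R) : ℕ → R
  | 0 => 0
  | 1 => 1
  | n + 2 => (if (n + 2) % 2 = 0 then a else b) * biF a b q (n + 1) + q ^ n * biF a b q n

/-- The auxiliary q-biperiodic Fibonacci sequence (same recurrence, initial values 1, 0). -/
def biFhat (a b q : R) : ℕ → R
  | 0 => 1
  | 1 => 0
  | n + 2 => (if (n + 2) % 2 = 0 then a else b) * biFhat a b q (n + 1) + q ^ n * biFhat a b q n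

/-- The biperiodic Fibonacci sequence. -/
def biT (a b : ℕ) : ℕ → ℕ
  | 0 => 0
  | 1 => 1
  | n + 2 => (if (n + 2) % 2 = 0 then a else b) * biT a b (n + 1) + biT a b n

/-- The Schur polynomials D_n(q). -/
def schurD (q : R) : ℕ → R
  | 0 => 0
  | 1 => 1
  | n + 2 => schurD q (n + 1) + q ^ n * schurD q n

/-- The auxiliary Schur polynomials with initial values 1, 0. -/
def schurDhat (q : R) : ℕ → R
  | 0 => 1
  | 1 => 0
  | n + 2 => schurDhat q (n + 1) + q ^ n * schurDhat q n

/-- The shifted q-biperiodic Fibonacci sequence F^(s)_n(q). -/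
def biFs (a b q : R) (s : ℕ) : ℕ → R
  | 0 => 0
  | 1 => 1
  | n + 2 =>
      (if (n + 2) % 2 = 0 then a ^ ((s + 1) % 2) * b ^ (1 - (s + 1) % 2)
       else a ^ (1 - (s + 1) % 2) * b ^ ((s + 1) % 2)) * biFs a b q s (n + 1)
        + q ^ (n + s) * biFs a b q s n


lemma qbinom_eq_zero (q : R) : ∀ n k : ℕ, n < k → qbinom q n k = 0 := by
  intro n
  induction n with
  | zero =>
    intro k hk
    match k, hk with
    | k + 1, _ => rfl
  | succ n ih =>
    intro k hk
    match k, hk with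
    | k + 1, hk =>
      rw [qbinom, ih k (by omega), ih (k + 1) (by omega)]
      ring

/-- Auxiliary sum. -/
def Hs (x q : R) (N M : ℕ) : R :=
  ∑ l ∈ Finset.range (M + 1), qbinom q (N - l) l * x ^ (M - l) * q ^ (l ^ 2)

lemma Hs_succ_right (x q : R) (N M : ℕ) :
    Hs x q N (M + 1) = x * Hs x q N M + qbinom q (N - (M + 1)) (M + 1) * q ^ ((M + 1) ^ 2) := by
  unfold Hs
  rw [Finset.sum_range_succ, Finset.mul_sum]
  congr 1
  · apply Finset.sum_congr rfl
    intro l hl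
    have hl' : l ≤ M := by simpa using Nat.lt_succ_iff.mp (Finset.mem_range.mp hl)
    have : M + 1 - l = (M - l) + 1 := by omega
    rw [this, pow_succ]
    ring
  · simp

lemma Hs_key (x q : R) (N M : ℕ) (h : M ≤ N) :
    Hs x q (N + 2) (M + 1) = Hs x q (N + 1) (M + 1) + q ^ (N + 1) * Hs x q N M := by
  unfold Hs
  rw [Finset.sum_range_succ' _ (M + 1), Finset.sum_range_succ' _ (M + 1), Finset.mul_sum]
  have h0 : ∀ K : ℕ, qbinom q K 0 = (1 : R) := fun K => by cases K <;> rfl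
  rw [h0, h0]
  have main : ∑ k ∈ Finset.range (M + 1),
        qbinom q (N + 2 - (k + 1)) (k + 1) * x ^ (M + 1 - (k + 1)) * q ^ ((k + 1) ^ 2)
      = ∑ k ∈ Finset.range (M + 1),
        (qbinom q (N + 1 - (k + 1)) (k + 1) * x ^ (M + 1 - (k + 1)) * q ^ ((k + 1) ^ 2)
          + q ^ (N + 1) * (qbinom q (N - k) k * x ^ (M - k) * q ^ (k ^ 2))) := by
    apply Finset.sum_congr rfl
    intro i hi
    have hiM : i ≤ M := Nat.lt_succ_iff.mp (Finset.mem_range.mp hi)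
    have e1 : N + 2 - (i + 1) = (N - i) + 1 := by omega
    have e2 : N + 1 - (i + 1) = N - i := by omega
    have e3 : M + 1 - (i + 1) = M - i := by omega
    rw [e1, e2, e3, qbinom]
    by_cases hc : 2 * i ≤ N
    · have hq : q ^ (N - i - i) * q ^ ((i + 1) ^ 2) = q ^ (N + 1) * q ^ (i ^ 2) := by
        rw [← pow_add, ← pow_add]
        congr 1
        have : (i + 1) ^ 2 = i ^ 2 + 2 * i + 1 := by ring
        omega
      calc (qbinom q (N - i) i * q ^ (N - i - i) + qbinom q (N - i) (i + 1)) * x ^ (M - i) *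
            q ^ ((i + 1) ^ 2)
          = qbinom q (N - i) (i + 1) * x ^ (M - i) * q ^ ((i + 1) ^ 2) +
              qbinom q (N - i) i * x ^ (M - i) * (q ^ (N - i - i) * q ^ ((i + 1) ^ 2)) := by ring
        _ = _ := by rw [hq]; ring
    · rw [qbinom_eq_zero q (N - i) i (by omega)]
      ring
  rw [main, Finset.sum_add_distrib]
  ring

lemma biF_formula (a b q : R) : ∀ n : ℕ, biF a b q (n + 1) = a ^ (n % 2) * Hs (a * b) q n (n / 2) := by
  intro n
  induction n using Nat.strong_induction_on with
  | _ n ih =>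
    match n with
    | 0 => simp [biF, Hs, qbinom]
    | 1 =>
      show biF a b q 2 = _
      rw [show biF a b q 2 = a * biF a b q 1 + q ^ 0 * biF a b q 0 from rfl]
      simp [biF, Hs, qbinom]
    | (n + 2) =>
      have ih1 := ih (n + 1) (by omega)
      have ih0 := ih n (by omega)
      rw [show biF a b q (n + 3) =
        (if (n + 1 + 2) % 2 = 0 then a else b) * biF a b q (n + 2) + q ^ (n + 1) * biF a b q (n + 1)
        from rfl, ih1, ih0]
      rcases Nat.even_or_odd n with he | ho
      · -- n = 2m, coefficient is b
        obtain ⟨m, hm⟩ := he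
        have hm' : n = 2 * m := by omega
        subst hm'
        rw [if_neg (show ¬ (2 * m + 1 + 2) % 2 = 0 by omega)]
        have d1 : (2 * m + 1) % 2 = 1 := by omega
        have d2 : (2 * m) % 2 = 0 := by omega
        have d3 : (2 * m + 2) % 2 = 0 := by omega
        have d4 : (2 * m + 1) / 2 = m := by omega
        have d5 : (2 * m) / 2 = m := by omega
        have d6 : (2 * m + 2) / 2 = m + 1 := by omega
        rw [d1, d2, d3, d4, d5, d6]
        simp only [pow_one, pow_zero, one_mul]
        rw [show (2 * m + 2) = (2 * m) + 2 from rfl, Hs_key (a * b) q (2 * m) m (by omega)]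
        have hz : Hs (a * b) q (2 * m + 1) (m + 1) = (a * b) * Hs (a * b) q (2 * m + 1) m := by
          rw [Hs_succ_right, qbinom_eq_zero q (2 * m + 1 - (m + 1)) (m + 1) (by omega)]
          ring
        rw [hz]
        ring
      · -- n = 2m+1, coefficient is a
        obtain ⟨m, hm⟩ := ho
        subst hm
        rw [if_pos (show (2 * m + 1 + 1 + 2) % 2 = 0 by omega)]
        have d1 : (2 * m + 1) % 2 = 1 := by omega
        have d2 : (2 * m + 2) % 2 = 0 := by omega
        have d3 : (2 * m + 3) % 2 = 1 := by omega
        have d4 : (2 * m + 1) / 2 = m := by omega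
        have d5 : (2 * m + 2) / 2 = m + 1 := by omega
        have d6 : (2 * m + 3) / 2 = m + 1 := by omega
        rw [show 2 * m + 1 + 2 = 2 * m + 3 from rfl, show 2 * m + 1 + 1 = 2 * m + 2 from rfl]
        rw [d1, d2, d3, d4, d5, d6]
        simp only [pow_one, pow_zero, one_mul]
        rw [show (2 * m + 3) = (2 * m + 1) + 2 from rfl, Hs_key (a * b) q (2 * m + 1) m (by omega)]
        ring

theorem stmt0 (a b q : R) (n : ℕ) :
    biF a b q n = a ^ ((n - 1) % 2) *
      ∑ l ∈ Finset.range ((n + 1) / 2),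
        qbinom q (n - l - 1) l * (a * b) ^ ((n - 1) / 2 - l) * q ^ (l ^ 2) := by
  match n with
  | 0 => simp [biF]
  | (n + 1) =>
    rw [biF_formula]
    have e1 : (n + 1 - 1) % 2 = n % 2 := by omega
    have e2 : (n + 1 + 1) / 2 = n / 2 + 1 := by omega
    have e3 : (n + 1 - 1) / 2 = n / 2 := by omega
    rw [e1, e2, e3]
    unfold Hs
    congr 1
    apply Finset.sum_congr rfl
    intro l _
    rw [show n + 1 - l - 1 = n - l by omega]
end

section
/- For all integers n ≥ 0, the biperiodic Fibonacci number satisfies t_n = a^{ξ(n-1)} · Σ_{i=0}^{⌊(n-1)/2⌋} C(n-i-1, i) · (ab)^{⌊(n-1)/2⌋ - i}, where C denotes the ordinary binomial coefficient and ξ(m) = m mod 2. -/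
open Finset PowerSeries

variable {R : Type*} [CommRing R]

/-!
Splitting by parity, `t (2m+1) = ∑_{i ≤ m} C(2m-i, i) (ab)^(m-i)` and
`t (2m+2) = a ∑_{i ≤ m} C(2m+1-i, i) (ab)^(m-i)`. Pascal's rule
`C(N+1-i, i) = C(N-i, i) + C(N-i, i-1)` shows that these sums satisfy the two-step recurrence
of `t`, the factor `a` of the even terms combining with `b` into `ab`.
-/

section ChoosePowSum

variable {S : Type*} [CommSemiring S]

def choosePowSum (x : S) (N m : ℕ) : S :=
  ∑ i ∈ range (m + 1), (N - i).choose i * x ^ (m - i)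

theorem choosePowSum_succ_succ (x : S) {N m : ℕ} (hm : m < N) :
    choosePowSum x (N + 1) (m + 1) = choosePowSum x N (m + 1) + choosePowSum x (N - 1) m := by
  have pascal : ∀ j ∈ range (m + 1), (N + 1 - (j + 1)).choose (j + 1) * x ^ (m + 1 - (j + 1)) =
      (N - (j + 1)).choose (j + 1) * x ^ (m + 1 - (j + 1)) + (N - 1 - j).choose j * x ^ (m - j) := by
    intro j hj
    rw [mem_range] at hj
    rw [show N + 1 - (j + 1) = N - 1 - j + 1 by omega, Nat.choose_succ_succ',
      show N - 1 - j = N - (j + 1) by omega, show m + 1 - (j + 1) = m - j by omega]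
    push_cast
    ring
  unfold choosePowSum
  rw [sum_range_succ', sum_range_succ' _ (m + 1), sum_congr rfl pascal, sum_add_distrib]
  simp only [Nat.choose_zero_right, Nat.sub_zero]
  ring

theorem choosePowSum_diag_succ (x : S) (m : ℕ) :
    choosePowSum x (2 * m + 1) (m + 1) = x * choosePowSum x (2 * m + 1) m := by
  unfold choosePowSum
  rw [sum_range_succ, mul_sum, Nat.choose_eq_zero_of_lt (by omega : 2 * m + 1 - (m + 1) < m + 1),
    Nat.cast_zero, zero_mul, add_zero]
  refine sum_congr rfl fun i hi => ?_
  rw [mem_range] at hi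
  rw [show m + 1 - i = m - i + 1 by omega, pow_succ]
  ring

end ChoosePowSum

theorem biT_odd_even (a b m : ℕ) :
    biT a b (2 * m + 1) = choosePowSum (a * b) (2 * m) m ∧
      biT a b (2 * m + 2) = a * choosePowSum (a * b) (2 * m + 1) m := by
  induction m with
  | zero => simp [biT, choosePowSum]
  | succ m ih =>
    have hodd : biT a b (2 * (m + 1) + 1) = choosePowSum (a * b) (2 * (m + 1)) (m + 1) := by
      rw [show 2 * (m + 1) + 1 = 2 * m + 1 + 2 by ring, biT, if_neg (by omega), ih.1, ih.2,
        show 2 * (m + 1) = 2 * m + 1 + 1 by ring, choosePowSum_succ_succ _ (by omega),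
        choosePowSum_diag_succ, Nat.add_sub_cancel]
      ring
    refine ⟨hodd, ?_⟩
    rw [show 2 * (m + 1) + 2 = 2 * m + 2 + 2 by ring, biT, if_pos (by omega),
      show 2 * m + 2 + 1 = 2 * (m + 1) + 1 by ring, hodd, ih.2,
      choosePowSum_succ_succ _ (by omega : m < 2 * (m + 1)),
      show 2 * (m + 1) - 1 = 2 * m + 1 by omega]
    ring

theorem biT_succ (a b k : ℕ) :
    biT a b (k + 1) = a ^ (k % 2) * choosePowSum (a * b) k (k / 2) := by
  obtain ⟨m, rfl | rfl⟩ := Nat.even_or_odd' k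
  · simp [(biT_odd_even a b m).1]
  · rw [(biT_odd_even a b m).2]
    simp [Nat.add_mod, show (2 * m + 1) / 2 = m by omega]

theorem stmt1_general (a b : ℕ) (n : ℕ) :
    biT a b n = a ^ ((n - 1) % 2) *
      ∑ i ∈ Finset.range ((n + 1) / 2),
        Nat.choose (n - i - 1) i * (a * b) ^ ((n - 1) / 2 - i) := by
  cases n with
  | zero => simp [biT]
  | succ k =>
    rw [biT_succ, choosePowSum, Nat.add_sub_cancel, show (k + 1 + 1) / 2 = k / 2 + 1 by omega]
    simp only [Nat.sub_right_comm (k + 1) _ 1, Nat.add_sub_cancel, Nat.cast_id]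

theorem stmt1 (a b : ℕ) (ha : 0 < a) (hb : 0 < b) (n : ℕ) :
    biT a b n = a ^ ((n - 1) % 2) *
      ∑ i ∈ Finset.range ((n + 1) / 2),
        Nat.choose (n - i - 1) i * (a * b) ^ ((n - 1) / 2 - i) :=
  stmt1_general a b n
end

section
/- For all integers n ≥ 0 and k ≥ 1, F_n(q)·Fhat_{n+k}(q) − F_{n+k}(q)·Fhat_n(q) = (−1)^{n−1} · q^{C(n,2)} · Σ_{j=0}^{k−1} qbinom(k−1−j, j) · a^{⌊(k−1)/2⌋ + ξ(k+1)ξ(n+1) − j} · b^{⌊(k−1)/2⌋ + ξ(k+1)ξ(n) − j} · q^{j² + nj}. -/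
open Finset PowerSeries

variable {R : Type*} [CommRing R]

lemma qbinom_zero (q : R) : ∀ n k, n < k → qbinom q n k = 0
  | 0, _ + 1, _ => rfl
  | n + 1, k + 1, h => by
      show qbinom q n k * q ^ (n - k) + qbinom q n (k + 1) = 0
      rw [qbinom_zero q n k (by omega), qbinom_zero q n (k+1) (by omega)]
      ring

lemma qbinom_pascal (q : R) (n k : ℕ) :
    qbinom q (n+1) (k+1) = qbinom q n k * q ^ (n - k) + qbinom q n (k + 1) := rfl


/-- Core exponent lemma for the "c·T(k+1)" part. -/
lemma expL1 (a b : R) (n k j : ℕ) (hj : 2*j ≤ k) :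
    a ^ ((k+1)/2 + ((k+1)%2) * ((n+1)%2) - j) * b ^ ((k+1)/2 + ((k+1)%2) * (n%2) - j)
      = (if (n+k) % 2 = 0 then a else b) *
        (a ^ (k/2 + (k%2)*((n+1)%2) - j) * b ^ (k/2 + (k%2)*(n%2) - j)) := by
  rcases Nat.even_or_odd k with ⟨m, hm⟩ | ⟨m, hm⟩ <;>
    rcases Nat.even_or_odd n with ⟨t, ht⟩ | ⟨t, ht⟩ <;> subst hm <;> subst ht

  · simp only [show (t + t + 1) % 2 = 1 by omega, show (t + t) % 2 = 0 by omega,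
      mul_one, mul_zero, add_zero]
    rw [if_pos (by omega)]
    rw [show (m + m + 1) / 2 + (m + m + 1) % 2 - j = m - j + 1 by omega, show (m + m + 1) / 2 - j = m - j by omega,
      show (m + m) / 2 + (m + m) % 2 - j = m - j by omega, show (m + m) / 2 - j = m - j by omega]
    ring
  · simp only [show (2 * t + 1 + 1) % 2 = 0 by omega, show (2 * t + 1) % 2 = 1 by omega,
      mul_one, mul_zero, add_zero]
    rw [if_neg (by omega)]
    rw [show (m + m + 1) / 2 - j = m - j by omega, show (m + m + 1) / 2 + (m + m + 1) % 2 - j = m - j + 1 by omega,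
      show (m + m) / 2 - j = m - j by omega, show (m + m) / 2 + (m + m) % 2 - j = m - j by omega]
    ring
  · simp only [show (t + t + 1) % 2 = 1 by omega, show (t + t) % 2 = 0 by omega,
      mul_one, mul_zero, add_zero]
    rw [if_neg (by omega)]
    rw [show (2 * m + 1 + 1) / 2 + (2 * m + 1 + 1) % 2 - j = m - j + 1 by omega, show (2 * m + 1 + 1) / 2 - j = m - j + 1 by omega,
      show (2 * m + 1) / 2 + (2 * m + 1) % 2 - j = m - j + 1 by omega, show (2 * m + 1) / 2 - j = m - j by omega]
    ring
  · simp only [show (2 * t + 1 + 1) % 2 = 0 by omega, show (2 * t + 1) % 2 = 1 by omega,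
      mul_one, mul_zero, add_zero]
    rw [if_pos (by omega)]
    rw [show (2 * m + 1 + 1) / 2 - j = m - j + 1 by omega, show (2 * m + 1 + 1) / 2 + (2 * m + 1 + 1) % 2 - j = m - j + 1 by omega,
      show (2 * m + 1) / 2 - j = m - j by omega, show (2 * m + 1) / 2 + (2 * m + 1) % 2 - j = m - j + 1 by omega]
    ring

lemma expL2 (a b q : R) (n k j : ℕ) (hj : 2*j + 1 ≤ k) :
    q ^ (k-1-j-j) * (a ^ ((k+1)/2 + (k+1)%2 * ((n+1)%2) - (j+1)) *
        b ^ ((k+1)/2 + (k+1)%2 * (n%2) - (j+1)) * q ^ ((j+1)^2 + n*(j+1)))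
      = q ^ (n+k) * (a ^ ((k-1)/2 + (k+1)%2 * ((n+1)%2) - j) *
          b ^ ((k-1)/2 + (k+1)%2 * (n%2) - j) * q ^ (j^2 + n*j)) := by
  have ea : (k+1)/2 + (k+1)%2 * ((n+1)%2) - (j+1) = (k-1)/2 + (k+1)%2 * ((n+1)%2) - j := by
    rcases Nat.even_or_odd k with ⟨m, hm⟩ | ⟨m, hm⟩ <;> subst hm
    · simp only [show (m + m + 1) % 2 = 1 by omega, one_mul]; omega
    · simp only [show (2 * m + 1 + 1) % 2 = 0 by omega, zero_mul]; omega
  have eb : (k+1)/2 + (k+1)%2 * (n%2) - (j+1) = (k-1)/2 + (k+1)%2 * (n%2) - j := by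
    rcases Nat.even_or_odd k with ⟨m, hm⟩ | ⟨m, hm⟩ <;> subst hm
    · simp only [show (m + m + 1) % 2 = 1 by omega, one_mul]; omega
    · simp only [show (2 * m + 1 + 1) % 2 = 0 by omega, zero_mul]; omega
  rw [ea, eb, show (j+1)^2 + n*(j+1) = j^2 + n*j + (2*j+1+n) by ring, pow_add,
    show n + k = (k-1-j-j) + (2*j+1+n) by omega, pow_add]
  ring

lemma qbinom_zero_right (q : R) (m : ℕ) : qbinom q m 0 = 1 := by cases m <;> rfl

def Tsum (a b q : R) (n k : ℕ) : R :=
  ∑ j ∈ Finset.range k,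
    qbinom q (k - 1 - j) j *
      a ^ ((k - 1) / 2 + ((k + 1) % 2) * ((n + 1) % 2) - j) *
      b ^ ((k - 1) / 2 + ((k + 1) % 2) * (n % 2) - j) *
      q ^ (j ^ 2 + n * j)

lemma Tsum_rec (a b q : R) (n k : ℕ) (hk : 1 ≤ k) :
    Tsum a b q n (k+2)
      = (if (n+k) % 2 = 0 then a else b) * Tsum a b q n (k+1)
        + q^(n+k) * Tsum a b q n k := by
  unfold Tsum
  rw [show k+2-1 = k+1 by omega, show k+1-1 = k by omega,
      show (k+2+1)%2 = (k+1)%2 by omega, show (k+1+1)%2 = k%2 by omega]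
  rw [Finset.sum_range_succ']
  have hsplit : ∀ j ∈ Finset.range (k+1),
      qbinom q (k + 1 - (j + 1)) (j + 1) * a ^ ((k + 1) / 2 + (k + 1) % 2 * ((n + 1) % 2) - (j + 1)) *
          b ^ ((k + 1) / 2 + (k + 1) % 2 * (n % 2) - (j + 1)) * q ^ ((j + 1) ^ 2 + n * (j + 1))
        = (qbinom q (k - 1 - j) (j + 1) * a ^ ((k + 1) / 2 + (k + 1) % 2 * ((n + 1) % 2) - (j + 1)) *
            b ^ ((k + 1) / 2 + (k + 1) % 2 * (n % 2) - (j + 1)) * q ^ ((j + 1) ^ 2 + n * (j + 1)))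
          + qbinom q (k - 1 - j) j *
              (q ^ (k - 1 - j - j) * (a ^ ((k + 1) / 2 + (k + 1) % 2 * ((n + 1) % 2) - (j + 1)) *
                b ^ ((k + 1) / 2 + (k + 1) % 2 * (n % 2) - (j + 1)) * q ^ ((j + 1) ^ 2 + n * (j + 1)))) := by
    intro j hj
    rcases Nat.lt_or_ge j k with hjk | hjk
    · rw [show k + 1 - (j + 1) = (k - 1 - j) + 1 by omega, qbinom_pascal]
      ring
    · have hj' : j = k := by simp only [Finset.mem_range] at hj; omega
      rw [hj']
      rw [show k + 1 - (k + 1) = 0 by omega, show k - 1 - k = 0 by omega,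
        qbinom_zero q 0 (k+1) (by omega), qbinom_zero q 0 k (by omega)]
      ring
  rw [Finset.sum_congr rfl hsplit, Finset.sum_add_distrib]
  have claimA : (∑ j ∈ Finset.range (k+1),
        qbinom q (k - 1 - j) (j + 1) * a ^ ((k + 1) / 2 + (k + 1) % 2 * ((n + 1) % 2) - (j + 1)) *
          b ^ ((k + 1) / 2 + (k + 1) % 2 * (n % 2) - (j + 1)) * q ^ ((j + 1) ^ 2 + n * (j + 1)))
      + qbinom q (k + 1 - 0) 0 * a ^ ((k + 1) / 2 + (k + 1) % 2 * ((n + 1) % 2) - 0) *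
          b ^ ((k + 1) / 2 + (k + 1) % 2 * (n % 2) - 0) * q ^ (0 ^ 2 + n * 0)
      = (if (n + k) % 2 = 0 then a else b) *
          ∑ j ∈ Finset.range (k + 1),
            qbinom q (k - j) j * a ^ (k / 2 + k % 2 * ((n + 1) % 2) - j) *
              b ^ (k / 2 + k % 2 * (n % 2) - j) * q ^ (j ^ 2 + n * j) := by
    rw [Finset.sum_range_succ, Finset.sum_range_succ']
    have hGk : qbinom q (k - 1 - k) (k + 1) * a ^ ((k + 1) / 2 + (k + 1) % 2 * ((n + 1) % 2) - (k + 1)) *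
        b ^ ((k + 1) / 2 + (k + 1) % 2 * (n % 2) - (k + 1)) * q ^ ((k + 1) ^ 2 + n * (k + 1)) = 0 := by
      rw [show k - 1 - k = 0 by omega, qbinom_zero q 0 (k+1) (by omega)]; ring
    rw [hGk, add_zero, mul_add, Finset.mul_sum]
    have hterm : ∀ j ∈ Finset.range k,
        qbinom q (k - 1 - j) (j + 1) * a ^ ((k + 1) / 2 + (k + 1) % 2 * ((n + 1) % 2) - (j + 1)) *
          b ^ ((k + 1) / 2 + (k + 1) % 2 * (n % 2) - (j + 1)) * q ^ ((j + 1) ^ 2 + n * (j + 1))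
        = (if (n + k) % 2 = 0 then a else b) *
            (qbinom q (k - (j + 1)) (j + 1) * a ^ (k / 2 + k % 2 * ((n + 1) % 2) - (j + 1)) *
              b ^ (k / 2 + k % 2 * (n % 2) - (j + 1)) * q ^ ((j + 1) ^ 2 + n * (j + 1))) := by
      intro j hj
      rw [show k - (j + 1) = k - 1 - j by omega]
      by_cases hle : j + 1 ≤ k - 1 - j
      · have := expL1 a b n k (j+1) (by omega)
        linear_combination (qbinom q (k - 1 - j) (j+1) * q ^ ((j + 1) ^ 2 + n * (j + 1))) * this
      · rw [qbinom_zero q (k - 1 - j) (j + 1) (by omega)]; ring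
    rw [Finset.sum_congr rfl hterm]
    have hf0 : qbinom q (k + 1 - 0) 0 * a ^ ((k + 1) / 2 + (k + 1) % 2 * ((n + 1) % 2) - 0) *
        b ^ ((k + 1) / 2 + (k + 1) % 2 * (n % 2) - 0) * q ^ (0 ^ 2 + n * 0)
        = (if (n + k) % 2 = 0 then a else b) *
            (qbinom q (k - 0) 0 * a ^ (k / 2 + k % 2 * ((n + 1) % 2) - 0) *
              b ^ (k / 2 + k % 2 * (n % 2) - 0) * q ^ (0 ^ 2 + n * 0)) := by
      rw [qbinom_zero_right, qbinom_zero_right]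
      have := expL1 a b n k 0 (by omega)
      linear_combination (q ^ (0 ^ 2 + n * 0)) * this
    rw [hf0]
  have claimB : (∑ j ∈ Finset.range (k+1),
        qbinom q (k - 1 - j) j *
          (q ^ (k - 1 - j - j) * (a ^ ((k + 1) / 2 + (k + 1) % 2 * ((n + 1) % 2) - (j + 1)) *
            b ^ ((k + 1) / 2 + (k + 1) % 2 * (n % 2) - (j + 1)) * q ^ ((j + 1) ^ 2 + n * (j + 1)))))
      = q ^ (n + k) *
          ∑ j ∈ Finset.range k,
            qbinom q (k - 1 - j) j * a ^ ((k - 1) / 2 + (k + 1) % 2 * ((n + 1) % 2) - j) *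
              b ^ ((k - 1) / 2 + (k + 1) % 2 * (n % 2) - j) * q ^ (j ^ 2 + n * j) := by
    rw [Finset.sum_range_succ]
    have hHk : qbinom q (k - 1 - k) k *
        (q ^ (k - 1 - k - k) * (a ^ ((k + 1) / 2 + (k + 1) % 2 * ((n + 1) % 2) - (k + 1)) *
          b ^ ((k + 1) / 2 + (k + 1) % 2 * (n % 2) - (k + 1)) * q ^ ((k + 1) ^ 2 + n * (k + 1)))) = 0 := by
      rw [show k - 1 - k = 0 by omega, qbinom_zero q 0 k (by omega)]; ring
    rw [hHk, add_zero, Finset.mul_sum]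
    apply Finset.sum_congr rfl
    intro j hj
    by_cases hle : j ≤ k - 1 - j
    · have := expL2 a b q n k j (by omega)
      linear_combination (qbinom q (k - 1 - j) j) * this
    · rw [qbinom_zero q (k - 1 - j) j (by omega)]; ring
  linear_combination claimA + claimB

lemma biF_add_two (a b q : R) (m : ℕ) :
    biF a b q (m+2) = (if (m+2) % 2 = 0 then a else b) * biF a b q (m+1) + q ^ m * biF a b q m := rfl

lemma biFhat_add_two (a b q : R) (m : ℕ) :
    biFhat a b q (m+2) = (if (m+2) % 2 = 0 then a else b) * biFhat a b q (m+1) + q ^ m * biFhat a b q m := rfl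

lemma cassini (a b q : R) (n : ℕ) :
    biF a b q n * biFhat a b q (n+1) - biF a b q (n+1) * biFhat a b q n
      = (-1 : R) ^ (n+1) * q ^ (n*(n-1)/2) := by
  induction n with
  | zero => norm_num [biF, biFhat]
  | succ n ih =>
      have hC2 : (n+1) * (n+1-1) / 2 = n*(n-1)/2 + n := by
        rw [← Nat.choose_two_right, ← Nat.choose_two_right, Nat.choose_succ_succ,
          Nat.choose_one_right]
        exact Nat.add_comm n (n.choose 2)
      show biF a b q (n+1) * biFhat a b q (n+2) - biF a b q (n+2) * biFhat a b q (n+1)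
        = (-1 : R) ^ (n+1+1) * q ^ ((n+1)*(n+1-1)/2)
      rw [biF_add_two, biFhat_add_two, hC2, pow_add]
      linear_combination (-(q ^ n)) * ih

lemma main (a b q : R) : ∀ k n : ℕ,
    biF a b q n * biFhat a b q (n+k+1) - biF a b q (n+k+1) * biFhat a b q n
      = (-1 : R) ^ (n+1) * q ^ (n*(n-1)/2) * Tsum a b q n (k+1)
  | 0, n => by
      have h1 : Tsum a b q n (0+1) = 1 := by
        simp [Tsum, qbinom]
      rw [h1, mul_one]
      exact cassini a b q n
  | 1, n => by
      have h2 : Tsum a b q n (1+1) = a ^ ((n+1) % 2) * b ^ (n % 2) := by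
        simp [Tsum, Finset.sum_range_succ, qbinom, qbinom_zero_right]
      have hc := cassini a b q n
      show biF a b q n * biFhat a b q (n+2) - biF a b q (n+2) * biFhat a b q n
        = (-1 : R) ^ (n+1) * q ^ (n*(n-1)/2) * Tsum a b q n (1+1)
      rw [h2, biF_add_two, biFhat_add_two]
      rcases Nat.even_or_odd n with ⟨t, ht⟩ | ⟨t, ht⟩ <;> subst ht
      · rw [show (if (t+t+2) % 2 = 0 then a else b) = a from if_pos (by omega),
          show (t+t+1) % 2 = 1 by omega, show (t+t) % 2 = 0 by omega, pow_one, pow_zero]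
        linear_combination a * hc
      · rw [show (if (2*t+1+2) % 2 = 0 then a else b) = b from if_neg (by omega),
          show (2*t+1+1) % 2 = 0 by omega, show (2*t+1) % 2 = 1 by omega, pow_one, pow_zero]
        linear_combination b * hc
  | (k+2), n => by
      have ih1 : biF a b q n * biFhat a b q (n+k+1) - biF a b q (n+k+1) * biFhat a b q n
          = (-1 : R) ^ (n+1) * q ^ (n*(n-1)/2) * Tsum a b q n (k+1) := main a b q k n
      have ih2 : biF a b q n * biFhat a b q (n+k+2) - biF a b q (n+k+2) * biFhat a b q n
          = (-1 : R) ^ (n+1) * q ^ (n*(n-1)/2) * Tsum a b q n (k+2) := main a b q (k+1) n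
      have hrec : Tsum a b q n (k+3)
          = (if (n+(k+1)) % 2 = 0 then a else b) * Tsum a b q n (k+2)
            + q ^ (n+(k+1)) * Tsum a b q n (k+1) := Tsum_rec a b q n (k+1) (by omega)
      have hif : (if (n+k+1+2) % 2 = 0 then a else b) = (if (n+(k+1)) % 2 = 0 then a else b) := by
        by_cases hp : (n+(k+1)) % 2 = 0
        · rw [if_pos hp, if_pos (by omega)]
        · rw [if_neg hp, if_neg (by omega)]
      show biF a b q n * biFhat a b q (n+k+1+2) - biF a b q (n+k+1+2) * biFhat a b q n
        = (-1 : R) ^ (n+1) * q ^ (n*(n-1)/2) * Tsum a b q n (k+3)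
      rw [biF_add_two a b q (n+k+1), biFhat_add_two a b q (n+k+1), hif, hrec]
      linear_combination (if (n+(k+1)) % 2 = 0 then a else b) * ih2 + q ^ (n+k+1) * ih1


theorem stmt3 (a b q : R) (n k : ℕ) (hk : 1 ≤ k) :
    biF a b q n * biFhat a b q (n + k) - biF a b q (n + k) * biFhat a b q n =
      (-1 : R) ^ (n + 1) * q ^ (n * (n - 1) / 2) *
        ∑ j ∈ Finset.range k,
          qbinom q (k - 1 - j) j *
            a ^ ((k - 1) / 2 + ((k + 1) % 2) * ((n + 1) % 2) - j) *
            b ^ ((k - 1) / 2 + ((k + 1) % 2) * (n % 2) - j) *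
            q ^ (j ^ 2 + n * j) := by
  obtain ⟨k', rfl⟩ : ∃ k', k = k' + 1 := ⟨k - 1, by omega⟩
  have := main a b q k' n
  rw [show n + (k' + 1) = n + k' + 1 by omega]
  simpa only [Tsum] using this
end

section
/- For all integers n ≥ 0, F_n(q)·Fhat_{n+1}(q) − F_{n+1}(q)·Fhat_n(q) = (−1)^{n−1} · q^{n(n−1)/2}. -/
open Finset PowerSeries

variable {R : Type*} [CommRing R]

theorem stmt4 (a b q : R) (n : ℕ) :
    biF a b q n * biFhat a b q (n + 1) - biF a b q (n + 1) * biFhat a b q n =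
      (-1 : R) ^ (n + 1) * q ^ (n * (n - 1) / 2) := by
  induction n with
  | zero => simp [biF, biFhat]
  | succ n ih =>
    have h : (n + 1) * n / 2 = n * (n - 1) / 2 + n := by
      cases n with
      | zero => rfl
      | succ m =>
        have : (m + 2) * (m + 1) = (m + 1) * m + 2 * (m + 1) := by ring
        rw [this, Nat.add_mul_div_left _ _ (by norm_num : 0 < 2)]
        simp
    show biF a b q (n + 1) * biFhat a b q (n + 2) -
        biF a b q (n + 2) * biFhat a b q (n + 1) = _
    rw [show biF a b q (n + 2) = (if (n + 2) % 2 = 0 then a else b) * biF a b q (n + 1)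
        + q ^ n * biF a b q n from rfl,
      show biFhat a b q (n + 2) = (if (n + 2) % 2 = 0 then a else b) * biFhat a b q (n + 1)
        + q ^ n * biFhat a b q n from rfl, Nat.add_sub_cancel, h, pow_add]
    have := ih
    ring_nf
    ring_nf at this
    linear_combination (-(q ^ n) : R) * this
end

section
/- For all integers n ≥ 1, F_{2n+1}(q) = (ab + q^{2n−1} + q^{2n−2})·F_{2n−1}(q) − q^{4n−5}·F_{2n−3}(q). -/
open Finset PowerSeries

variable {R : Type*} [CommRing R]

theorem stmt7 (a b q : R) (n : ℕ) (hn : 2 ≤ n) :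
    biF a b q (2 * n + 1) =
      (a * b + q ^ (2 * n - 1) + q ^ (2 * n - 2)) * biF a b q (2 * n - 1)
        - q ^ (4 * n - 5) * biF a b q (2 * n - 3) := by
  obtain ⟨m, rfl⟩ : ∃ m, n = m + 2 := ⟨n - 2, by omega⟩
  have e1 : 2 * (m + 2) + 1 = (2 * m + 3) + 2 := by ring
  have e2 : 2 * (m + 2) - 1 = (2 * m + 2) + 1 := by omega
  have e3 : 2 * (m + 2) - 3 = 2 * m + 1 := by omega
  have e4 : 2 * (m + 2) - 2 = 2 * m + 2 := by omega
  have e5 : 4 * (m + 2) - 5 = 4 * m + 3 := by omega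
  rw [e1, e2, e3, e4, e5]
  have h5 : biF a b q (2 * m + 3 + 2) =
      b * biF a b q (2 * m + 4) + q ^ (2 * m + 3) * biF a b q (2 * m + 3) := by
    rw [show 2 * m + 3 + 2 = (2 * m + 3) + 2 from rfl, biF]
    simp [Nat.add_mul_mod_self_left, Nat.add_mod]
  have h4 : biF a b q (2 * m + 4) =
      a * biF a b q (2 * m + 3) + q ^ (2 * m + 2) * biF a b q (2 * m + 2) := by
    rw [show 2 * m + 4 = (2 * m + 2) + 2 from rfl, biF]
    simp [Nat.add_mod, Nat.mul_mod_right]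
  have h3 : biF a b q (2 * m + 3) =
      b * biF a b q (2 * m + 2) + q ^ (2 * m + 1) * biF a b q (2 * m + 1) := by
    rw [show 2 * m + 3 = (2 * m + 1) + 2 from rfl, biF]
    simp [Nat.add_mod, Nat.mul_mod_right]
  have key : q ^ (2 * m + 2) * (b * biF a b q (2 * m + 2)) =
      q ^ (2 * m + 2) * (biF a b q (2 * m + 3) - q ^ (2 * m + 1) * biF a b q (2 * m + 1)) := by
    rw [h3]; ring
  rw [h5, h4, show 2 * m + 2 + 1 = 2 * m + 3 from rfl]
  have : b * (a * biF a b q (2 * m + 3) + q ^ (2 * m + 2) * biF a b q (2 * m + 2))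
      = a * b * biF a b q (2 * m + 3)
        + q ^ (2 * m + 2) * (biF a b q (2 * m + 3) - q ^ (2 * m + 1) * biF a b q (2 * m + 1)) := by
    rw [← key]; ring
  rw [this]
  ring_nf
end

section
/- The generating function of the Schur polynomials satisfies Σ_{n≥0} D_n(q) x^n = Σ_{j≥0} q^{j²} x^{2j+1} / ((1−x)(1−qx)···(1−q^j x)). -/
open Finset PowerSeries

variable {R : Type*} [CommRing R]

/-!
Write `D(x) = ∑ Dₙ xⁿ`. The recurrence says `(1 - x) D(x) = x + x² D(qx)`. The terms
`Tⱼ(x) = q^{j²} x^{2j+1} / (x;q)_{j+1}` satisfy `(1 - x) T₀ = x` and `(1 - x) T_{j+1}(x) = x² Tⱼ(qx)`,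
because `(x;q)_{j+2} = (1 - x) (qx;q)_{j+1}`. Hence the partial sums `S_N = ∑_{j<N} Tⱼ` satisfy
`(1 - x) S_{N+1}(x) = x + x² S_N(qx)`, and comparing with the equation for `D` shows by induction
that `D - S_N` is divisible by `x^{2N}`.
-/

theorem PowerSeries.rescale_C (a c : R) : rescale a (C c) = C c := by
  ext n
  rw [coeff_rescale, coeff_C]
  split_ifs with h <;> simp [h]

theorem PowerSeries.rescale_inv {k : Type*} [Field k] (a : k) (φ : k⟦X⟧) :
    rescale a φ⁻¹ = (rescale a φ)⁻¹ := by
  have hc : constantCoeff (rescale a φ) = constantCoeff φ := by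
    rw [← coeff_zero_eq_constantCoeff_apply, coeff_rescale, pow_zero, one_mul,
      coeff_zero_eq_constantCoeff_apply]
  by_cases h : constantCoeff φ = 0
  · rw [inv_eq_zero.2 h, inv_eq_zero.2 (hc.trans h), map_zero]
  · rw [eq_inv_iff_mul_eq_one (hc ▸ h), ← map_mul, PowerSeries.inv_mul_cancel _ h, map_one]

theorem PowerSeries.X_pow_dvd_rescale (a : R) {n : ℕ} {φ : R⟦X⟧}
    (h : X ^ n ∣ φ) : X ^ n ∣ rescale a φ :=
  (Dvd.intro_left _ (by rw [map_pow, rescale_X, mul_pow])).trans (map_dvd (rescale a) h)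

theorem one_sub_X_mul_mk_schurD (q : R) :
    (1 - X) * PowerSeries.mk (schurD q) = X + X ^ 2 * rescale q (PowerSeries.mk (schurD q)) := by
  ext (_ | _ | n) <;> simp [schurD, sub_mul, coeff_X_pow_mul', coeff_rescale, coeff_X]

theorem X_pow_dvd_mk_schurD_sub {q : R} {S : ℕ → R⟦X⟧}
    (hS : ∀ N, (1 - X) * S (N + 1) = X + X ^ 2 * rescale q (S N)) (N : ℕ) :
    X ^ (2 * N) ∣ PowerSeries.mk (schurD q) - S N := by
  induction N with
  | zero => simp
  | succ N ih =>
    have key : (1 - X) * (PowerSeries.mk (schurD q) - S (N + 1)) =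
        X ^ 2 * rescale q (PowerSeries.mk (schurD q) - S N) := by
      rw [mul_sub, one_sub_X_mul_mk_schurD, hS, map_sub]
      ring
    have hunit : IsUnit (1 - X : R⟦X⟧) := isUnit_iff_constantCoeff.2 (by simp)
    rw [← hunit.dvd_mul_left, key, show 2 * (N + 1) = 2 + 2 * N by ring, pow_add]
    exact mul_dvd_mul_left _ (X_pow_dvd_rescale q ih)

noncomputable def qPochhammer (q : R) (n : ℕ) : R⟦X⟧ :=
  ∏ i ∈ Finset.range n, (1 - C (q ^ i) * X)

theorem qPochhammer_succ (q : R) (n : ℕ) :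
    qPochhammer q (n + 1) = (1 - X) * rescale q (qPochhammer q n) := by
  rw [qPochhammer, qPochhammer, Finset.prod_range_succ', mul_comm, map_prod]
  simp only [map_sub, map_one, map_mul, rescale_C, rescale_X, pow_succ, pow_zero, one_mul,
    mul_assoc]

section

variable {K : Type*} [Field K]

noncomputable def schurTerm (q : K) (j : ℕ) : K⟦X⟧ :=
  C (q ^ (j ^ 2)) * X ^ (2 * j + 1) * (qPochhammer q (j + 1))⁻¹

theorem one_sub_X_mul_schurTerm_zero (q : K) : (1 - X) * schurTerm q 0 = X := by
  have h : qPochhammer q 1 = 1 - X := by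
    rw [qPochhammer_succ, qPochhammer, Finset.prod_range_zero, map_one, mul_one]
  rw [schurTerm, h, zero_pow two_ne_zero, pow_zero, map_one, one_mul, pow_one, mul_left_comm,
    PowerSeries.mul_inv_cancel _ (by simp), mul_one]

theorem one_sub_X_mul_schurTerm_succ (q : K) (j : ℕ) :
    (1 - X) * schurTerm q (j + 1) = X ^ 2 * rescale q (schurTerm q j) := by
  have h := PowerSeries.mul_inv_cancel (1 - X : K⟦X⟧) (by simp)
  rw [schurTerm, schurTerm, qPochhammer_succ q (j + 1), PowerSeries.mul_inv_rev,
    show (j + 1) ^ 2 = j ^ 2 + (2 * j + 1) by ring]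
  simp only [map_mul, map_pow, rescale_X, rescale_C, rescale_inv, pow_add]
  linear_combination (C q ^ j ^ 2 * C q ^ (2 * j + 1) * X ^ (2 * (j + 1) + 1) *
    (rescale q (qPochhammer q (j + 1)))⁻¹) * h

theorem one_sub_X_mul_sum_schurTerm (q : K) (N : ℕ) :
    (1 - X) * ∑ j ∈ Finset.range (N + 1), schurTerm q j =
      X + X ^ 2 * rescale q (∑ j ∈ Finset.range N, schurTerm q j) := by
  rw [Finset.sum_range_succ', mul_add, one_sub_X_mul_schurTerm_zero, Finset.mul_sum, map_sum,
    Finset.mul_sum, add_comm]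
  simp only [one_sub_X_mul_schurTerm_succ]

end

theorem stmt9 {K : Type*} [Field K] (q : K) (m : ℕ) :
    PowerSeries.coeff m (PowerSeries.mk (schurD q)) =
      PowerSeries.coeff m
        (∑ j ∈ Finset.range (m + 1),
          PowerSeries.C (q ^ (j ^ 2)) * PowerSeries.X ^ (2 * j + 1) *
            (∏ i ∈ Finset.range (j + 1), (1 - PowerSeries.C (q ^ i) * PowerSeries.X))⁻¹) := by
  have hdvd := X_pow_dvd_mk_schurD_sub (S := fun N ↦ ∑ j ∈ Finset.range N, schurTerm q j)
    (one_sub_X_mul_sum_schurTerm q) (m + 1)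
  have hcoeff := X_pow_dvd_iff.1 hdvd m (by omega)
  rwa [map_sub, sub_eq_zero] at hcoeff
end

section
/- For all integers n ≥ 0: Σ_{k=1}^{n+1} q^k · F_k(q) · a^{ξ(n)ξ(k)} · b^{ξ(k+1) − ξ(n)ξ(k+1)} · (ab)^{⌊(n−k+1)/2⌋} = F_{n+3}(q) − a^{ξ(n)} · (ab)^{⌊(n+2)/2⌋}. -/
open Finset PowerSeries

variable {R : Type*} [CommRing R]

theorem stmt12 (a b q : R) (n : ℕ) :
    ∑ k ∈ Finset.Icc 1 (n + 1),
        q ^ k * biF a b q k * a ^ ((n % 2) * (k % 2)) *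
          b ^ ((k + 1) % 2 - (n % 2) * ((k + 1) % 2)) * (a * b) ^ ((n + 1 - k) / 2) =
      biF a b q (n + 3) - a ^ (n % 2) * (a * b) ^ ((n + 2) / 2) := by
  induction n with
  | zero =>
    simp [biF]
    ring
  | succ n ih =>
    have hrec : biF a b q (n + 4) =
        (if n % 2 = 0 then a else b) * biF a b q (n + 3) + q ^ (n + 2) * biF a b q (n + 2) := by
      have h4 : (n + 4) % 2 = n % 2 := by omega
      show (if (n + 2 + 2) % 2 = 0 then a else b) * biF a b q (n + 2 + 1)
          + q ^ (n + 2) * biF a b q (n + 2) = _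
      rw [show n + 2 + 2 = n + 4 from rfl, h4, show n + 2 + 1 = n + 3 from rfl]
    have hterm : ∀ k ∈ Finset.Icc 1 (n + 1),
        q ^ k * biF a b q k * a ^ (((n + 1) % 2) * (k % 2)) *
          b ^ ((k + 1) % 2 - ((n + 1) % 2) * ((k + 1) % 2)) * (a * b) ^ ((n + 1 + 1 - k) / 2)
        = (if n % 2 = 0 then a else b) * (q ^ k * biF a b q k * a ^ ((n % 2) * (k % 2)) *
          b ^ ((k + 1) % 2 - (n % 2) * ((k + 1) % 2)) * (a * b) ^ ((n + 1 - k) / 2)) := by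
      intro k hk
      simp only [Finset.mem_Icc] at hk
      have hn2 : n % 2 = 0 ∨ n % 2 = 1 := by omega
      have hk2 : k % 2 = 0 ∨ k % 2 = 1 := by omega
      rcases hn2 with hn | hn <;> rcases hk2 with hkk | hkk
      · rw [hkk, show (n + 1) % 2 = 1 by omega, show (k + 1) % 2 = 1 by omega,
          show (n + 1 + 1 - k) / 2 = (n + 1 - k) / 2 + 1 by omega, hn]
        norm_num
        ring
      · rw [hkk, show (n + 1) % 2 = 1 by omega, show (k + 1) % 2 = 0 by omega,
          show (n + 1 + 1 - k) / 2 = (n + 1 - k) / 2 by omega, hn]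
        norm_num
        ring
      · rw [hkk, show (n + 1) % 2 = 0 by omega, show (k + 1) % 2 = 1 by omega,
          show (n + 1 + 1 - k) / 2 = (n + 1 - k) / 2 by omega, hn]
        norm_num
        ring
      · rw [hkk, show (n + 1) % 2 = 0 by omega, show (k + 1) % 2 = 0 by omega,
          show (n + 1 + 1 - k) / 2 = (n + 1 - k) / 2 + 1 by omega, hn]
        norm_num
        ring
    rw [Finset.sum_Icc_succ_top (by omega : 1 ≤ n + 1 + 1),
      Finset.sum_congr rfl hterm, ← Finset.mul_sum, ih,
      show n + 1 + 3 = n + 4 from rfl, hrec]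
    rcases (by omega : n % 2 = 0 ∨ n % 2 = 1) with hn | hn
    · rw [show (n + 1) % 2 = 1 by omega, show (n + 2) % 2 = 0 by omega,
        show (n + 2 + 1) % 2 = 1 by omega,
        show (n + 1 + 1 - (n + 2)) / 2 = 0 by omega,
        show (n + 1 + 2) / 2 = (n + 2) / 2 by omega, hn]
      norm_num
      ring
    · rw [show (n + 1) % 2 = 0 by omega, show (n + 2) % 2 = 1 by omega,
        show (n + 2 + 1) % 2 = 0 by omega,
        show (n + 1 + 1 - (n + 2)) / 2 = 0 by omega,
        show (n + 1 + 2) / 2 = (n + 2) / 2 + 1 by omega, hn]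
      norm_num
      ring
end

section
/- For all integers n ≥ 0: Σ_{k=1}^{n+1} t_k · a^{ξ(n)ξ(k)} · b^{ξ(k+1) − ξ(n)ξ(k+1)} · (ab)^{⌊(n−k+1)/2⌋} = t_{n+3} − a^{ξ(n)} · (ab)^{⌊(n+2)/2⌋}. -/
open Finset PowerSeries

variable {R : Type*} [CommRing R]

lemma biT_add2 (a b n : ℕ) :
    biT a b (n + 2) = (if (n + 2) % 2 = 0 then a else b) * biT a b (n + 1) + biT a b n := by
  rfl

theorem stmt13' (a b : ℕ) (ha : 0 < a) (hb : 0 < b) (n : ℕ) :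
    (∑ k ∈ Finset.Icc 1 (n + 1),
        (biT a b k : ℤ) * (a : ℤ) ^ ((n % 2) * (k % 2)) *
          (b : ℤ) ^ ((k + 1) % 2 - (n % 2) * ((k + 1) % 2)) *
          ((a : ℤ) * b) ^ ((n + 1 - k) / 2)) =
      (biT a b (n + 3) : ℤ) - (a : ℤ) ^ (n % 2) * ((a : ℤ) * b) ^ ((n + 2) / 2) := by
  induction n using Nat.twoStepInduction with
  | zero =>
    simp [biT]
    ring
  | one =>
    rw [show (1:ℕ) + 1 = 2 from rfl, Finset.sum_Icc_succ_top (by norm_num), Finset.Icc_self,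
      Finset.sum_singleton]
    simp [biT]
    ring
  | more n ih _ =>
    have h1 : n + 2 + 1 = (n + 2) + 1 := rfl
    rw [Finset.sum_Icc_succ_top (by omega), Finset.sum_Icc_succ_top (by omega)]
    have hsum : (∑ k ∈ Finset.Icc 1 (n + 1),
        (biT a b k : ℤ) * (a : ℤ) ^ ((n + 2) % 2 * (k % 2)) *
          (b : ℤ) ^ ((k + 1) % 2 - (n + 2) % 2 * ((k + 1) % 2)) *
          ((a : ℤ) * b) ^ ((n + 2 + 1 - k) / 2)) =
        ((a : ℤ) * b) * ∑ k ∈ Finset.Icc 1 (n + 1),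
        (biT a b k : ℤ) * (a : ℤ) ^ (n % 2 * (k % 2)) *
          (b : ℤ) ^ ((k + 1) % 2 - n % 2 * ((k + 1) % 2)) *
          ((a : ℤ) * b) ^ ((n + 1 - k) / 2) := by
      rw [Finset.mul_sum]
      apply Finset.sum_congr rfl
      intro k hk
      simp only [Finset.mem_Icc] at hk
      have e1 : (n + 2) % 2 = n % 2 := by omega
      have e2 : (n + 2 + 1 - k) / 2 = (n + 1 - k) / 2 + 1 := by omega
      rw [e1, e2, pow_succ]
      ring
    rw [hsum, ih]
    have hb3 : biT a b (n + 3 + 2) = (if (n + 3 + 2) % 2 = 0 then a else b) * biT a b (n + 3 + 1) + biT a b (n + 3) := biT_add2 a b (n+3)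
    have hb2 : biT a b (n + 2 + 2) = (if (n + 2 + 2) % 2 = 0 then a else b) * biT a b (n + 2 + 1) + biT a b (n + 2) := biT_add2 a b (n+2)
    obtain ⟨m, rfl⟩ | ⟨m, rfl⟩ := Nat.even_or_odd n
    · have hA : biT a b (m + m + 4) = a * biT a b (m + m + 3) + biT a b (m + m + 2) := by
        rw [show m + m + 4 = (m + m + 2) + 2 from by omega, biT_add2, if_pos (by omega)]
      have hB : biT a b (m + m + 5) = b * biT a b (m + m + 4) + biT a b (m + m + 3) := by
        rw [show m + m + 5 = (m + m + 3) + 2 from by omega, biT_add2, if_neg (by omega)]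
      simp only [show m + m + 1 + 1 = m + m + 2 from by omega,
        show m + m + 2 + 1 = m + m + 3 from by omega,
        show m + m + 2 + 3 = m + m + 5 from by omega,
        show m + m + 2 + 2 = m + m + 4 from by omega,
        show m + m + 3 + 1 = m + m + 4 from by omega]
      rw [hB, hA]
      simp only [show (m + m) % 2 = 0 from by omega, show (m + m + 2) % 2 = 0 from by omega,
        show (m + m + 3) % 2 = 1 from by omega, show (m + m + 4) % 2 = 0 from by omega,
        show (m + m + 3 - (m + m + 2)) / 2 = 0 from by omega,
        show (m + m + 3 - (m + m + 3)) / 2 = 0 from by omega,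
        show (m + m + 4) / 2 = (m + m + 2) / 2 + 1 from by omega]
      push_cast
      norm_num
      ring
    · have hA : biT a b (2 * m + 5) = b * biT a b (2 * m + 4) + biT a b (2 * m + 3) := by
        rw [show 2 * m + 5 = (2 * m + 3) + 2 from by omega, biT_add2, if_neg (by omega)]
      have hB : biT a b (2 * m + 6) = a * biT a b (2 * m + 5) + biT a b (2 * m + 4) := by
        rw [show 2 * m + 6 = (2 * m + 4) + 2 from by omega, biT_add2, if_pos (by omega)]
      simp only [show 2 * m + 1 + 1 + 1 = 2 * m + 3 from by omega,
        show 2 * m + 1 + 1 = 2 * m + 2 from by omega,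
        show 2 * m + 1 + 2 + 1 = 2 * m + 4 from by omega,
        show 2 * m + 1 + 2 + 3 = 2 * m + 6 from by omega,
        show 2 * m + 1 + 2 + 2 = 2 * m + 5 from by omega,
        show 2 * m + 1 + 3 = 2 * m + 4 from by omega,
        show 2 * m + 1 + 2 = 2 * m + 3 from by omega,
        show 2 * m + 3 + 1 = 2 * m + 4 from by omega,
        show 2 * m + 4 + 1 = 2 * m + 5 from by omega]
      rw [hB, hA]
      simp only [show (2 * m + 1) % 2 = 1 from by omega, show (2 * m + 3) % 2 = 1 from by omega,
        show (2 * m + 4) % 2 = 0 from by omega, show (2 * m + 5) % 2 = 1 from by omega,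
        show (2 * m + 4 - (2 * m + 3)) / 2 = 0 from by omega,
        show (2 * m + 4 - (2 * m + 4)) / 2 = 0 from by omega,
        show (2 * m + 5) / 2 = (2 * m + 3) / 2 + 1 from by omega]
      push_cast
      norm_num
      ring

theorem stmt13 (a b : ℕ) (ha : 0 < a) (hb : 0 < b) (n : ℕ) :
    (∑ k ∈ Finset.Icc 1 (n + 1),
        (biT a b k : ℤ) * (a : ℤ) ^ ((n % 2) * (k % 2)) *
          (b : ℤ) ^ ((k + 1) % 2 - (n % 2) * ((k + 1) % 2)) *
          ((a : ℤ) * b) ^ ((n + 1 - k) / 2)) =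
      (biT a b (n + 3) : ℤ) - (a : ℤ) ^ (n % 2) * ((a : ℤ) * b) ^ ((n + 2) / 2) := by
  exact stmt13' a b ha hb n
end

section
/- For all integers n ≥ 0: a · Σ_{k=0}^{n} F_{2k+1}(q) · q^{n² + n − (k² + k)} = F_{2n+2}(q). -/
open Finset PowerSeries

variable {R : Type*} [CommRing R]

theorem stmt14 (a b q : R) (n : ℕ) :
    a * ∑ k ∈ Finset.range (n + 1),
        biF a b q (2 * k + 1) * q ^ (n ^ 2 + n - (k ^ 2 + k)) =
      biF a b q (2 * n + 2) := by
  induction n with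
  | zero => simp [biF]
  | succ n ih =>
    rw [Finset.sum_range_succ, mul_add]
    have hstep : ∀ k ∈ Finset.range (n + 1),
        biF a b q (2 * k + 1) * q ^ ((n+1) ^ 2 + (n+1) - (k ^ 2 + k)) =
        (biF a b q (2 * k + 1) * q ^ (n ^ 2 + n - (k ^ 2 + k))) * q ^ (2*n+2) := by
      intro k hk
      rw [Finset.mem_range] at hk
      have hk' : k ≤ n := Nat.lt_succ_iff.mp hk
      have hle : k ^ 2 + k ≤ n ^ 2 + n := by
        have := Nat.pow_le_pow_left hk' 2
        omega
      have : (n+1) ^ 2 + (n+1) - (k ^ 2 + k) = (n ^ 2 + n - (k ^ 2 + k)) + (2*n+2) := by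
        ring_nf
        omega
      rw [this, pow_add, mul_assoc]
    rw [Finset.sum_congr rfl hstep, ← Finset.sum_mul]
    have key : a * ((∑ i ∈ Finset.range (n+1), biF a b q (2*i+1) * q ^ (n^2+n-(i^2+i))) *
        q ^ (2*n+2)) = biF a b q (2*n+2) * q ^ (2*n+2) := by
      rw [← ih]; ring
    rw [key]
    have h1 : 2 * (n+1) + 2 = (2*n+2) + 2 := by ring
    have h2 : (n+1) ^ 2 + (n+1) - ((n+1) ^ 2 + (n+1)) = 0 := by omega
    rw [h1, h2]
    show _ = (if (2*n+2+2) % 2 = 0 then a else b) * biF a b q (2*n+2+1) + _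
    have : (2*n+2+2) % 2 = 0 := by omega
    rw [if_pos this]
    have h3 : 2 * n + 2 + 1 = 2 * (n+1) + 1 := by ring
    rw [h3]
    ring
end

section
/- For all integers n ≥ 0: a · Σ_{k=0}^{n} t_{2k+1} = t_{2n+2}. -/
open Finset PowerSeries

variable {R : Type*} [CommRing R]

theorem stmt15 (a b : ℕ) (ha : 0 < a) (hb : 0 < b) (n : ℕ) :
    a * ∑ k ∈ Finset.range (n + 1), biT a b (2 * k + 1) = biT a b (2 * n + 2) := by
  induction n with
  | zero => simp [biT]
  | succ n ih =>
    rw [Finset.sum_range_succ, Nat.mul_add, ih]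
    have h : biT a b (2 * n + 2 + 2) = a * biT a b (2 * n + 2 + 1) + biT a b (2 * n + 2) := by
      rw [biT]; simp [Nat.mul_add_mod]
    have e1 : 2 * (n + 1) + 2 = 2 * n + 2 + 2 := by ring
    have e2 : 2 * (n + 1) + 1 = 2 * n + 2 + 1 := by ring
    rw [e1, e2, h]; ring
end

section
/- For all integers n, m ≥ 0: F_{n+m+1}(q) = F_{m+1}(q) · F^{(m)}_{n+1}(q) + q^m · F_m(q) · F^{(m+1)}_n(q), where F^{(s)} denotes the shifted q-biperiodic Fibonacci sequence. -/
open Finset PowerSeries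

variable {R : Type*} [CommRing R]

lemma biF_two (a b q : R) (n : ℕ) :
    biF a b q (n + 2) = (if n % 2 = 0 then a else b) * biF a b q (n + 1) + q ^ n * biF a b q n := by
  rw [biF, Nat.add_mod_right]

lemma biFs_two (a b q : R) (s n : ℕ) :
    biFs a b q s (n + 2) =
      (if n % 2 = 0 then a ^ ((s + 1) % 2) * b ^ (1 - (s + 1) % 2)
       else a ^ (1 - (s + 1) % 2) * b ^ ((s + 1) % 2)) * biFs a b q s (n + 1)
        + q ^ (n + s) * biFs a b q s n := by
  rw [biFs, Nat.add_mod_right]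

theorem stmt16 (a b q : R) (n m : ℕ) :
    biF a b q (n + m + 1) =
      biF a b q (m + 1) * biFs a b q m (n + 1) + q ^ m * biF a b q m * biFs a b q (m + 1) n := by

  induction n using Nat.twoStepInduction with
  | zero =>
      simp [biFs]
  | one =>
      have e : 1 + m + 1 = m + 2 := by omega
      rw [e, biF_two, show (2:ℕ) = 0 + 2 from rfl, biFs_two]
      simp only [biFs]
      rcases Nat.mod_two_eq_zero_or_one m with hm | hm
      · have h1 : (m + 1) % 2 = 1 := by omega
        simp [hm, h1]; ring
      · have h1 : (m + 1) % 2 = 0 := by omega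
        simp [hm, h1]; ring
  | more n ih1 ih2 =>
      have e : n + 2 + m + 1 = (n + m + 1) + 2 := by omega
      have ih2' : biF a b q (n + m + 2) =
          biF a b q (m + 1) * biFs a b q m (n + 1 + 1) +
            q ^ m * biF a b q m * biFs a b q (m + 1) (n + 1) := by
        rw [← ih2]; ring_nf
      rw [e, biF_two, ih1, show n + m + 1 + 1 = n + m + 2 from rfl, ih2',
        show n + 2 + 1 = (n + 1) + 2 from rfl, biFs_two a b q m (n + 1),
        biFs_two a b q (m + 1) n]
      rcases Nat.mod_two_eq_zero_or_one m with hm | hm <;>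
        rcases Nat.mod_two_eq_zero_or_one n with hn | hn
      · have h1 : (n + m + 1) % 2 = 1 := by omega
        have h2 : (m + 1) % 2 = 1 := by omega
        have h3 : (n + 1) % 2 = 1 := by omega
        have h4 : (m + 1 + 1) % 2 = 0 := by omega
        simp only [h1, h2, h3, h4, hn, hm, if_true, if_false]
        norm_num; ring
      · have h1 : (n + m + 1) % 2 = 0 := by omega
        have h2 : (m + 1) % 2 = 1 := by omega
        have h3 : (n + 1) % 2 = 0 := by omega
        have h4 : (m + 1 + 1) % 2 = 0 := by omega
        simp only [h1, h2, h3, h4, hn, hm, if_true, if_false]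
        norm_num; ring
      · have h1 : (n + m + 1) % 2 = 0 := by omega
        have h2 : (m + 1) % 2 = 0 := by omega
        have h3 : (n + 1) % 2 = 1 := by omega
        have h4 : (m + 1 + 1) % 2 = 1 := by omega
        simp only [h1, h2, h3, h4, hn, hm, if_true, if_false]
        norm_num; ring
      · have h1 : (n + m + 1) % 2 = 1 := by omega
        have h2 : (m + 1) % 2 = 0 := by omega
        have h3 : (n + 1) % 2 = 0 := by omega
        have h4 : (m + 1 + 1) % 2 = 1 := by omega
        simp only [h1, h2, h3, h4, hn, hm, if_true, if_false]
        norm_num; ring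
end
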